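/- arXiv:1505.02325 — 7 statements merged into one kernel-verified Lean document; each statement's English description precedes it below -/
import Mathlib

section
/- In an 'ordinary' Capped-Guesses game, let δ* be the uniform distribution on ∪_{i=1}^{J} E_i (δ*(p)=1/∑_{j=1}^{J}|E_j| for p∈∪_{i≤J}E_i, 0 otherwise), and let α*∈Δ(𝒜) be any mixed guesser strategy whose marginals ρ*(p)=∑_{A∈𝒜, p∈A} α*(A) satisfy ρ*(p)=K/∑_{j=1}^{J}|E_j| + B_i for every p∈E_i with i≤J, and ρ*(p)=0 for every p∈E_i with i>J, where B_i = (∑_{j=1}^{J}C_j|E_j| − C_i∑_{j=1}^{J}|E_j|)/(λ∑_{j=1}^{J}|E_j|). Then (δ*,α*) is a mixed Nash equilibrium. -/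
open Finset

noncomputable section

variable {P : Type*} [Fintype P] [DecidableEq P] {N : ℕ}

/-- The usability cost `c(d)`: `C i` for the unique partition `E i` containing `d`. -/
def cost (E : Fin N → Finset P) (C : Fin N → ℝ) (d : P) : ℝ :=
  ∑ i, if d ∈ E i then C i else 0

/-- Picker's pure utility `u_D(d,A) = -c(d) - λ·1_A(d)`. -/
def uD (E : Fin N → Finset P) (C : Fin N → ℝ) (lam : ℝ) (d : P) (A : Finset P) : ℝ :=
  -cost E C d - lam * (if d ∈ A then 1 else 0)

/-- Guesser's pure utility `u_A(d,A) = γ·1_A(d)`. -/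
def uA (gam : ℝ) (d : P) (A : Finset P) : ℝ :=
  gam * (if d ∈ A then 1 else 0)

/-- Mixed picker strategies: probability distributions on `P`. -/
def simplexP (P : Type*) [Fintype P] : Set (P → ℝ) :=
  {δ | (∀ p, 0 ≤ δ p) ∧ ∑ p, δ p = 1}

/-- Guesser pure strategies: subsets of `P` of size `K`. -/
def GA (P : Type*) [Fintype P] [DecidableEq P] (K : ℕ) := {A : Finset P // A.card = K}

instance (K : ℕ) : Fintype (GA P K) := by unfold GA; infer_instance

/-- Mixed guesser strategies: probability distributions on `GA P K`. -/
def simplexA (P : Type*) [Fintype P] [DecidableEq P] (K : ℕ) : Set (GA P K → ℝ) :=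
  {α | (∀ A, 0 ≤ α A) ∧ ∑ A, α A = 1}

/-- Picker's expected utility. -/
def UD (E : Fin N → Finset P) (C : Fin N → ℝ) (lam : ℝ) (K : ℕ)
    (δ : P → ℝ) (α : GA P K → ℝ) : ℝ :=
  ∑ d, ∑ A : GA P K, δ d * α A * uD E C lam d A.1

/-- Guesser's expected utility. -/
def UA (gam : ℝ) (K : ℕ) (δ : P → ℝ) (α : GA P K → ℝ) : ℝ :=
  ∑ d, ∑ A : GA P K, δ d * α A * uA gam d A.1

/-- Mixed Nash equilibrium. -/
def IsNE (E : Fin N → Finset P) (C : Fin N → ℝ) (lam gam : ℝ) (K : ℕ)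
    (δ : P → ℝ) (α : GA P K → ℝ) : Prop :=
  δ ∈ simplexP P ∧ α ∈ simplexA P K ∧
    (∀ δ' ∈ simplexP P, UD E C lam K δ' α ≤ UD E C lam K δ α) ∧
    (∀ α' ∈ simplexA P K, UA gam K δ α' ≤ UA gam K δ α)

/-- Standing hypotheses of the Capped-Guesses game. -/
structure CappedHyp (P : Type*) [Fintype P] [DecidableEq P] {N : ℕ}
    (E : Fin N → Finset P) (C : Fin N → ℝ) (lam gam : ℝ) (K : ℕ) : Prop where
  hN : 0 < N
  nonemp : ∀ i, (E i).Nonempty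
  disj : ∀ i j, i ≠ j → Disjoint (E i) (E j)
  cover : ∀ p : P, ∃ i, p ∈ E i
  C_nonneg : 0 ≤ C ⟨0, hN⟩
  C_mono : StrictMono C
  lam_pos : 0 < lam
  gam_pos : 0 < gam
  K_pos : 0 < K
  K_lt : K < Fintype.card P

open Classical in
/-- The set `𝒥 = {j : L < j ≤ N, λK + ∑_{i<j}C_i|E_i| ≥ C_j ∑_{i<j}|E_i|}`; note that
`L < j` is equivalent to `K < ∑_{i<j}|E_i|`. -/
def Jset (E : Fin N → Finset P) (C : Fin N → ℝ) (lam : ℝ) (K : ℕ) : Finset (Fin N) :=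
  univ.filter (fun j =>
    K < ∑ i ∈ univ.filter (· < j), (E i).card ∧
    C j * (∑ i ∈ univ.filter (· < j), ((E i).card : ℝ)) ≤
      lam * K + ∑ i ∈ univ.filter (· < j), C i * ((E i).card : ℝ))

/-- `J = max 𝒥` (an arbitrary default when `𝒥 = ∅`). -/
def Jidx (E : Fin N → Finset P) (C : Fin N → ℝ) (lam : ℝ) (K : ℕ) (hN : 0 < N) : Fin N :=
  if h : (Jset E C lam K).Nonempty then (Jset E C lam K).max' h else ⟨0, hN⟩

/-- `∑_{i=1}^{J}|E_i|`. -/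
def Ssum (E : Fin N → Finset P) (J : Fin N) : ℝ :=
  ∑ i ∈ univ.filter (· ≤ J), ((E i).card : ℝ)

/-- `∑_{i=1}^{J}C_i|E_i|`. -/
def CSsum (E : Fin N → Finset P) (C : Fin N → ℝ) (J : Fin N) : ℝ :=
  ∑ i ∈ univ.filter (· ≤ J), C i * ((E i).card : ℝ)

/-- The game is "ordinary": `𝒥 ≠ ∅` and `C_1 + λ > (∑_{i≤J}C_i|E_i| + λK)/∑_{i≤J}|E_i|`. -/
def Ordinary (E : Fin N → Finset P) (C : Fin N → ℝ) (lam : ℝ) (K : ℕ) (hN : 0 < N) : Prop :=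
  (Jset E C lam K).Nonempty ∧
    (CSsum E C (Jidx E C lam K hN) + lam * K) / Ssum E (Jidx E C lam K hN) < C ⟨0, hN⟩ + lam

/-- The marginal probability `ρ(p)` that secret `p` is among the guesser's `K` guesses. -/
def marg (K : ℕ) (α : GA P K → ℝ) (p : P) : ℝ :=
  ∑ A : GA P K, if p ∈ A.1 then α A else 0

lemma cost_eq_of_mem (E : Fin N → Finset P) (C : Fin N → ℝ)
    (hdisj : ∀ i j, i ≠ j → Disjoint (E i) (E j)) {d : P} {i : Fin N} (hd : d ∈ E i) :
    cost E C d = C i := by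
  unfold cost
  rw [Finset.sum_eq_single i (fun j _ hji => if_neg fun hj =>
    Finset.disjoint_left.mp (hdisj j i hji) hj hd) (fun hi => absurd (mem_univ i) hi)]
  exact if_pos hd

lemma UD_eq_lin (E : Fin N → Finset P) (C : Fin N → ℝ) (lam : ℝ) (K : ℕ)
    (δ : P → ℝ) (α : GA P K → ℝ) (hα : ∑ A : GA P K, α A = 1) :
    UD E C lam K δ α = ∑ d, δ d * (-(cost E C d) - lam * marg K α d) := by
  unfold UD uD marg
  refine Finset.sum_congr rfl fun d _ => ?_
  have key : ∀ A : GA P K, δ d * α A * (-cost E C d - lam * (if d ∈ A.1 then 1 else 0))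
      = δ d * (-cost E C d) * α A - δ d * lam * (if d ∈ A.1 then α A else 0) := by
    intro A; split <;> ring
  rw [Finset.sum_congr rfl fun A _ => key A, Finset.sum_sub_distrib, ← Finset.mul_sum,
    ← Finset.mul_sum, hα]
  ring

lemma UA_eq_lin (gam : ℝ) (K : ℕ) (δ : P → ℝ) (α : GA P K → ℝ) :
    UA gam K δ α = gam * ∑ d, δ d * marg K α d := by
  unfold UA uA marg
  simp only [Finset.mul_sum]
  refine Finset.sum_congr rfl fun d _ => Finset.sum_congr rfl fun A _ => ?_
  split <;> ring

lemma sum_marg (K : ℕ) (α : GA P K → ℝ) :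
    ∑ d, marg K α d = K * ∑ A : GA P K, α A := by
  unfold marg
  rw [Finset.sum_comm, Finset.mul_sum]
  refine Finset.sum_congr rfl fun A _ => ?_
  rw [Finset.sum_ite_mem, Finset.univ_inter, Finset.sum_const, A.2, nsmul_eq_mul]

lemma marg_nonneg (K : ℕ) (α : GA P K → ℝ) (hα : ∀ A, 0 ≤ α A) (d : P) :
    0 ≤ marg K α d :=
  Finset.sum_nonneg fun A _ => by split; exacts [hα A, le_rfl]

/-- in an "ordinary" Capped-Guesses game, the uniform distribution on
`∪_{i≤J} E i` together with any mixed guesser strategy whose marginals are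
`ρ*(p) = K/∑_{j≤J}|E_j| + B_i` on `E i` for `i ≤ J` and `0` beyond `J`
(where `B_i = (∑_{j≤J}C_j|E_j| − C_i ∑_{j≤J}|E_j|)/(λ∑_{j≤J}|E_j|)`) is a mixed NE. -/
theorem capped_ordinary_NE
    (E : Fin N → Finset P) (C : Fin N → ℝ) (lam gam : ℝ) (K : ℕ)
    (h : CappedHyp P E C lam gam K)
    (hord : Ordinary E C lam K h.hN)
    (α : GA P K → ℝ) (hα : α ∈ simplexA P K)
    (hmarg₁ : ∀ i : Fin N, i ≤ Jidx E C lam K h.hN → ∀ p ∈ E i,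
      marg K α p = (K : ℝ) / Ssum E (Jidx E C lam K h.hN) +
        (CSsum E C (Jidx E C lam K h.hN) - C i * Ssum E (Jidx E C lam K h.hN)) /
          (lam * Ssum E (Jidx E C lam K h.hN)))
    (hmarg₂ : ∀ i : Fin N, Jidx E C lam K h.hN < i → ∀ p ∈ E i, marg K α p = 0) :
    IsNE E C lam gam K
      (fun p => if p ∈ (univ.filter (· ≤ Jidx E C lam K h.hN)).biUnion E
        then 1 / Ssum E (Jidx E C lam K h.hN) else 0)
      α := by
  classical
  obtain ⟨hαpos, hαsum⟩ := hα
  set J := Jidx E C lam K h.hN with hJdef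
  have hJmem' : J ∈ Jset E C lam K := by
    rw [hJdef]; unfold Jidx; rw [dif_pos hord.1]; exact Finset.max'_mem _ _
  have hJmax : ∀ j ∈ Jset E C lam K, j ≤ J := by
    intro j hj
    rw [hJdef]; unfold Jidx; rw [dif_pos hord.1]; exact Finset.le_max' _ _ hj
  have hJmem := hJmem'
  rw [Jset, Finset.mem_filter] at hJmem
  obtain ⟨-, hKlt, -⟩ := hJmem
  have hKltS : K < ∑ i ∈ univ.filter (· ≤ J), (E i).card :=
    lt_of_lt_of_le hKlt (Finset.sum_le_sum_of_subset (fun x hx => by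
      simp only [Finset.mem_filter, Finset.mem_univ, true_and] at hx ⊢
      exact le_of_lt hx))
  have hS_eq : Ssum E J = ((∑ i ∈ univ.filter (· ≤ J), (E i).card : ℕ) : ℝ) := by
    rw [Ssum]; push_cast; rfl
  have hSpos : 0 < Ssum E J := by
    rw [hS_eq]; exact_mod_cast lt_of_le_of_lt (Nat.zero_le K) hKltS
  set U := (univ.filter (· ≤ J)).biUnion E with hUdef
  have hcardU : U.card = ∑ i ∈ univ.filter (· ≤ J), (E i).card :=
    Finset.card_biUnion (fun i _ j _ hij => h.disj i j hij)
  have hδsum : ∑ p, (if p ∈ U then 1 / Ssum E J else 0) = 1 := by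
    rw [Finset.sum_ite_mem, Finset.univ_inter, Finset.sum_const, nsmul_eq_mul, hcardU,
      ← hS_eq, mul_one_div, div_self (ne_of_gt hSpos)]
  have hkey : ∀ i : Fin N, J < i → lam * K + CSsum E C J ≤ C i * Ssum E J := by
    intro i hJi
    have hJi' : (J : ℕ) < (i : ℕ) := hJi
    have hlt : (J : ℕ) + 1 < N := lt_of_le_of_lt (Nat.succ_le_of_lt hJi') i.isLt
    have hfilter : (univ.filter (· < (⟨(J : ℕ) + 1, hlt⟩ : Fin N)))
        = (univ.filter (· ≤ J)) := by
      ext k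
      simp only [Finset.mem_filter, Finset.mem_univ, true_and, Fin.lt_def, Fin.le_def]
      exact Nat.lt_succ_iff
    have hnot : (⟨(J : ℕ) + 1, hlt⟩ : Fin N) ∉ Jset E C lam K := by
      intro hmem
      have h1 := hJmax _ hmem
      rw [Fin.le_def] at h1
      simp at h1
    have h2 : ¬ (C ⟨(J : ℕ) + 1, hlt⟩ *
          (∑ i ∈ univ.filter (· < (⟨(J : ℕ) + 1, hlt⟩ : Fin N)), ((E i).card : ℝ)) ≤
        lam * K + ∑ i ∈ univ.filter (· < (⟨(J : ℕ) + 1, hlt⟩ : Fin N)),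
          C i * ((E i).card : ℝ)) := by
      intro hle
      exact hnot (by
        rw [Jset, Finset.mem_filter]
        exact ⟨Finset.mem_univ _, by rw [hfilter]; exact hKltS, hle⟩)
    push_neg at h2
    rw [hfilter] at h2
    have h3 : lam * K + CSsum E C J < C ⟨(J : ℕ) + 1, hlt⟩ * Ssum E J := by
      rw [CSsum, Ssum]; exact h2
    have hj_le : C ⟨(J : ℕ) + 1, hlt⟩ ≤ C i :=
      h.C_mono.monotone (by rw [Fin.le_def]; exact Nat.succ_le_of_lt hJi')
    calc lam * K + CSsum E C J ≤ C ⟨(J : ℕ) + 1, hlt⟩ * Ssum E J := le_of_lt h3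
      _ ≤ C i * Ssum E J := mul_le_mul_of_nonneg_right hj_le (le_of_lt hSpos)
  have hmemU : ∀ i : Fin N, i ≤ J → ∀ d ∈ E i, d ∈ U := by
    intro i hi d hd
    rw [hUdef]
    refine Finset.mem_biUnion.mpr ⟨i, ?_, hd⟩
    exact Finset.mem_filter.mpr ⟨Finset.mem_univ i, hi⟩
  have hS0 : Ssum E J ≠ 0 := ne_of_gt hSpos
  have hl0 : lam ≠ 0 := ne_of_gt h.lam_pos
  have hVeq : ∀ d ∈ U, -(cost E C d) - lam * marg K α d
      = -((CSsum E C J + lam * K) / Ssum E J) := by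
    intro d hd
    rw [hUdef, Finset.mem_biUnion] at hd
    obtain ⟨i, hiJ, hdi⟩ := hd
    rw [Finset.mem_filter] at hiJ
    rw [cost_eq_of_mem E C h.disj hdi, hmarg₁ i hiJ.2 d hdi]
    field_simp
    ring
  have hVle : ∀ d, -(cost E C d) - lam * marg K α d
      ≤ -((CSsum E C J + lam * K) / Ssum E J) := by
    intro d
    obtain ⟨i, hdi⟩ := h.cover d
    rcases le_or_gt i J with hle | hlt
    · exact le_of_eq (hVeq d (hmemU i hle d hdi))
    · rw [cost_eq_of_mem E C h.disj hdi, hmarg₂ i hlt d hdi, mul_zero, sub_zero,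
        neg_le_neg_iff, div_le_iff₀ hSpos]
      have := hkey i hlt
      linarith
  refine ⟨⟨fun p => ?_, hδsum⟩, ⟨hαpos, hαsum⟩, ?_, ?_⟩
  · dsimp only
    split
    · exact le_of_lt (one_div_pos.mpr hSpos)
    · exact le_rfl
  · intro δ' hδ'
    obtain ⟨hδ'pos, hδ'sum⟩ := hδ'
    rw [UD_eq_lin E C lam K _ α hαsum, UD_eq_lin E C lam K _ α hαsum]
    have hRHS : ∑ d, (if d ∈ U then 1 / Ssum E J else 0) *
        (-(cost E C d) - lam * marg K α d) = -((CSsum E C J + lam * K) / Ssum E J) := by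
      have key : ∀ d : P, (if d ∈ U then 1 / Ssum E J else 0) *
          (-(cost E C d) - lam * marg K α d)
          = (if d ∈ U then 1 / Ssum E J else 0) *
            (-((CSsum E C J + lam * K) / Ssum E J)) := by
        intro d
        by_cases hd : d ∈ U
        · rw [hVeq d hd]
        · simp [hd]
      rw [Finset.sum_congr rfl fun d _ => key d, ← Finset.sum_mul, hδsum, one_mul]
    rw [hRHS]
    calc ∑ d, δ' d * (-(cost E C d) - lam * marg K α d)
        ≤ ∑ d, δ' d * (-((CSsum E C J + lam * K) / Ssum E J)) :=
          Finset.sum_le_sum fun d _ => mul_le_mul_of_nonneg_left (hVle d) (hδ'pos d)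
      _ = -((CSsum E C J + lam * K) / Ssum E J) := by
          rw [← Finset.sum_mul, hδ'sum, one_mul]
  · intro α' hα'
    obtain ⟨hα'pos, hα'sum⟩ := hα'
    rw [UA_eq_lin, UA_eq_lin]
    have hsplit : ∀ β : GA P K → ℝ,
        ∑ d, (if d ∈ U then 1 / Ssum E J else 0) * marg K β d
        = (1 / Ssum E J) * ∑ d ∈ U, marg K β d := by
      intro β
      have key : ∀ d : P, (if d ∈ U then 1 / Ssum E J else 0) * marg K β d
          = (if d ∈ U then (1 / Ssum E J) * marg K β d else 0) := fun d => by
        by_cases hd : d ∈ U <;> simp [hd]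
      rw [Finset.sum_congr rfl fun d _ => key d, Finset.sum_ite_mem, Finset.univ_inter,
        Finset.mul_sum]
    rw [hsplit α', hsplit α]
    have hαU : ∑ d ∈ U, marg K α d = K := by
      have hzero : ∀ d ∈ (univ : Finset P), d ∉ U → marg K α d = 0 := by
        intro d _ hd
        obtain ⟨i, hdi⟩ := h.cover d
        rcases le_or_gt i J with hle | hlt
        · exact absurd (hmemU i hle d hdi) hd
        · exact hmarg₂ i hlt d hdi
      rw [Finset.sum_subset (Finset.subset_univ U) hzero, sum_marg, hαsum, mul_one]
    have hα'U : ∑ d ∈ U, marg K α' d ≤ K := by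
      calc ∑ d ∈ U, marg K α' d ≤ ∑ d, marg K α' d :=
            Finset.sum_le_sum_of_subset_of_nonneg (Finset.subset_univ U)
              (fun d _ _ => marg_nonneg K α' hα'pos d)
        _ = K := by rw [sum_marg, hα'sum, mul_one]
    rw [hαU]
    exact mul_le_mul_of_nonneg_left
      (mul_le_mul_of_nonneg_left hα'U (le_of_lt (one_div_pos.mpr hSpos)))
      (le_of_lt h.gam_pos)
end
end

section
/- All mixed Nash equilibria of the Capped-Guesses game yield the same expected utility for the picker: if (δ*,α*) is a NE, then u_D(δ*,α*) = max_{δ∈Δ(𝒫)} min_{α∈Δ(𝒜)} u_D(δ,α), the picker's maximin value. -/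
open Finset

noncomputable section

variable {P : Type*} [Fintype P] [DecidableEq P] {N : ℕ}

/-- The picker's worst-case (over guesser mixed strategies) expected utility. -/
def worstUD (E : Fin N → Finset P) (C : Fin N → ℝ) (lam : ℝ) (K : ℕ) (δ : P → ℝ) : ℝ :=
  sInf {x | ∃ α ∈ simplexA P K, x = UD E C lam K δ α}

/-- The picker's maximin value `max_{δ∈Δ(𝒫)} min_{α∈Δ(𝒜)} u_D(δ,α)`. -/
def maximinUD (E : Fin N → Finset P) (C : Fin N → ℝ) (lam : ℝ) (K : ℕ) : ℝ :=
  sSup {x | ∃ δ ∈ simplexP P, x = worstUD E C lam K δ}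

lemma UD_eq_aux (E : Fin N → Finset P) (C : Fin N → ℝ) (lam gam : ℝ) (hg : 0 < gam)
    (K : ℕ) (δ : P → ℝ) (α : GA P K → ℝ) (hs : ∑ A, α A = 1) :
    UD E C lam K δ α = -(∑ d, δ d * cost E C d) - (lam / gam) * UA gam K δ α := by
  unfold UD UA uD uA
  have hterm : ∀ (d : P) (A : GA P K),
      δ d * α A * (-cost E C d - lam * (if d ∈ A.1 then 1 else 0))
      = δ d * α A * (-cost E C d)
        + (-(lam / gam)) * (δ d * α A * (gam * (if d ∈ A.1 then 1 else 0))) := by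
    intro d A
    by_cases hd : d ∈ A.1 <;> simp only [hd, if_true, if_false] <;> field_simp <;> ring
  calc ∑ d, ∑ A : GA P K, δ d * α A * (-cost E C d - lam * (if d ∈ A.1 then 1 else 0))
      = ∑ d, ∑ A : GA P K, (δ d * α A * (-cost E C d)
        + (-(lam / gam)) * (δ d * α A * (gam * (if d ∈ A.1 then 1 else 0)))) := by
        simp only [hterm]
    _ = (∑ d, ∑ A : GA P K, δ d * α A * (-cost E C d))
        + (-(lam / gam)) * (∑ d, ∑ A : GA P K, δ d * α A * (gam * (if d ∈ A.1 then 1 else 0))) := by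
        rw [Finset.mul_sum]
        rw [← Finset.sum_add_distrib]
        congr 1; ext d
        rw [Finset.mul_sum, ← Finset.sum_add_distrib]
    _ = -(∑ d, δ d * cost E C d)
        - (lam / gam) * (∑ d, ∑ A : GA P K, δ d * α A * (gam * (if d ∈ A.1 then 1 else 0))) := by
        have hfst : ∀ d : P, ∑ A : GA P K, δ d * α A * (-cost E C d)
            = -(δ d * cost E C d) := by
          intro d
          rw [show (∑ A : GA P K, δ d * α A * (-cost E C d))
              = (-(δ d * cost E C d)) * ∑ A : GA P K, α A from by
            rw [Finset.mul_sum]; exact Finset.sum_congr rfl fun A _ => by ring]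
          rw [hs, mul_one]
        simp only [hfst]
        rw [← Finset.sum_neg_distrib]
        ring

lemma UA_bounds (gam : ℝ) (hg : 0 < gam) (K : ℕ) (δ : P → ℝ) (α : GA P K → ℝ)
    (hδ : δ ∈ simplexP P) (hα : α ∈ simplexA P K) :
    0 ≤ UA gam K δ α ∧ UA gam K δ α ≤ gam := by
  obtain ⟨hδ0, hδ1⟩ := hδ
  obtain ⟨hα0, hα1⟩ := hα
  constructor
  · apply Finset.sum_nonneg; intro d _
    apply Finset.sum_nonneg; intro A _
    unfold uA
    exact mul_nonneg (mul_nonneg (hδ0 d) (hα0 A))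
      (mul_nonneg hg.le (by split <;> norm_num))
  · have hle : UA gam K δ α ≤ ∑ d, ∑ A : GA P K, δ d * α A * gam := by
      apply Finset.sum_le_sum; intro d _
      apply Finset.sum_le_sum; intro A _
      unfold uA
      have h1 : gam * (if d ∈ A.1 then (1:ℝ) else 0) ≤ gam := by
        split <;> nlinarith
      exact mul_le_mul_of_nonneg_left h1 (mul_nonneg (hδ0 d) (hα0 A))
    have heq : ∑ d, ∑ A : GA P K, δ d * α A * gam = gam := by
      have : ∀ d : P, ∑ A : GA P K, δ d * α A * gam = δ d * gam := by
        intro d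
        rw [show (∑ A : GA P K, δ d * α A * gam)
            = (δ d * gam) * ∑ A : GA P K, α A from by
          rw [Finset.mul_sum]; exact Finset.sum_congr rfl fun A _ => by ring]
        rw [hα1, mul_one]
      simp only [this, ← Finset.sum_mul, hδ1, one_mul]
    linarith

/-- Every mixed Nash equilibrium of the Capped-Guesses game gives the picker
her maximin value. -/
theorem capped_NE_value_is_maximin
    (E : Fin N → Finset P) (C : Fin N → ℝ) (lam gam : ℝ) (K : ℕ)
    (h : CappedHyp P E C lam gam K)
    (δ : P → ℝ) (α : GA P K → ℝ) (hNE : IsNE E C lam gam K δ α) :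
    UD E C lam K δ α = maximinUD E C lam K := by
  obtain ⟨hδ, hα, hD, hA⟩ := hNE
  have hg := h.gam_pos
  have hl := h.lam_pos
  have hlg : 0 < lam / gam := div_pos hl hg
  -- α minimizes UD (δ, ·)
  have h1 : ∀ α' ∈ simplexA P K, UD E C lam K δ α ≤ UD E C lam K δ α' := by
    intro α' hα'
    rw [UD_eq_aux E C lam gam hg K δ α hα.2, UD_eq_aux E C lam gam hg K δ α' hα'.2]
    have hAle := hA α' hα'
    have := mul_le_mul_of_nonneg_left hAle hlg.le
    linarith
  -- lower bound on UD over mixed guesser strategies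
  have hbdd : ∀ δ' ∈ simplexP P,
      (-(∑ d, δ' d * cost E C d) - lam) ∈ lowerBounds
        {x | ∃ α'' ∈ simplexA P K, x = UD E C lam K δ' α''} := by
    rintro δ' hδ' x ⟨α'', hα'', rfl⟩
    rw [UD_eq_aux E C lam gam hg K δ' α'' hα''.2]
    obtain ⟨_, hub⟩ := UA_bounds gam hg K δ' α'' hδ' hα''
    have : (lam / gam) * UA gam K δ' α'' ≤ (lam / gam) * gam :=
      mul_le_mul_of_nonneg_left hub hlg.le
    rw [div_mul_cancel₀ _ hg.ne'] at this
    linarith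
  have hworst : worstUD E C lam K δ = UD E C lam K δ α := by
    apply IsLeast.csInf_eq
    exact ⟨⟨α, hα, rfl⟩, by rintro x ⟨α', hα', rfl⟩; exact h1 α' hα'⟩
  have : IsGreatest {x | ∃ δ' ∈ simplexP P, x = worstUD E C lam K δ'}
      (UD E C lam K δ α) := by
    constructor
    · exact ⟨δ, hδ, hworst.symm⟩
    · rintro x ⟨δ', hδ', rfl⟩
      have hle : worstUD E C lam K δ' ≤ UD E C lam K δ' α :=
        csInf_le ⟨_, hbdd δ' hδ'⟩ ⟨α, hα, rfl⟩
      exact hle.trans (hD δ' hδ')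
  exact (this.csSup_eq).symm
end
end

section
/- No commitment value in the Capped-Guesses game: for every picker mixed strategy δ∈Δ(𝒫) and every α∈Δ(𝒜) that maximizes u_A(δ,·) over Δ(𝒜), one has u_D(δ,α) = min_{α'∈Δ(𝒜)} u_D(δ,α'); consequently, the picker's optimal commitment utility max_{δ∈Δ(𝒫)} u_D(δ, α_BR(δ)) (where α_BR(δ) is any best response of the guesser to δ) equals the picker's maximin value max_{δ∈Δ(𝒫)} min_{α∈Δ(𝒜)} u_D(δ,α). -/
open Finset

noncomputable section

variable {P : Type*} [Fintype P] [DecidableEq P] {N : ℕ}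

/-- No commitment value in Capped-Guesses: any best response of the guesser to a
committed `δ` gives the picker her worst-case utility at `δ`; consequently the optimal
commitment utility of the picker equals her maximin value. -/
theorem capped_no_commitment_value
    (E : Fin N → Finset P) (C : Fin N → ℝ) (lam gam : ℝ) (K : ℕ)
    (h : CappedHyp P E C lam gam K) :
    (∀ δ ∈ simplexP P, ∀ α ∈ simplexA P K,
      (∀ α' ∈ simplexA P K, UA gam K δ α' ≤ UA gam K δ α) →
        UD E C lam K δ α = worstUD E C lam K δ) ∧
    (∀ br : (P → ℝ) → (GA P K → ℝ),
      (∀ δ ∈ simplexP P, br δ ∈ simplexA P K ∧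
          ∀ α' ∈ simplexA P K, UA gam K δ α' ≤ UA gam K δ (br δ)) →
        sSup {x | ∃ δ ∈ simplexP P, x = UD E C lam K δ (br δ)} = maximinUD E C lam K) := by
  have hg : gam ≠ 0 := h.gam_pos.ne'
  -- key decomposition: for any α' with total mass 1
  have key : ∀ (δ : P → ℝ) (α' : GA P K → ℝ), (∑ A, α' A = 1) →
      UD E C lam K δ α' = -(∑ d, δ d * cost E C d) - (lam/gam) * UA gam K δ α' := by
    intro δ α' hs
    have step : UD E C lam K δ α'
        = (∑ d, ∑ A : GA P K, δ d * α' A * (-cost E C d))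
          - (lam/gam) * UA gam K δ α' := by
      unfold UD UA
      rw [Finset.mul_sum, ← Finset.sum_sub_distrib]
      refine Finset.sum_congr rfl fun d _ => ?_
      rw [Finset.mul_sum, ← Finset.sum_sub_distrib]
      refine Finset.sum_congr rfl fun A _ => ?_
      simp only [uD, uA]
      field_simp
    rw [step]
    congr 1
    have : ∀ d : P, ∑ A : GA P K, δ d * α' A * (-cost E C d)
        = -(δ d * cost E C d) := by
      intro d
      have : ∑ A : GA P K, δ d * α' A * (-cost E C d)
          = (∑ A : GA P K, α' A) * (δ d * (-cost E C d)) := by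
        rw [Finset.sum_mul]
        exact Finset.sum_congr rfl fun A _ => by ring
      rw [this, hs]; ring
    simp_rw [this]
    rw [← Finset.sum_neg_distrib]
  have part1 : ∀ δ ∈ simplexP P, ∀ α ∈ simplexA P K,
      (∀ α' ∈ simplexA P K, UA gam K δ α' ≤ UA gam K δ α) →
        UD E C lam K δ α = worstUD E C lam K δ := by
    intro δ hδ α hα hbest
    have hlg : 0 ≤ lam / gam := le_of_lt (div_pos h.lam_pos h.gam_pos)
    have lb : ∀ x ∈ {x | ∃ α' ∈ simplexA P K, x = UD E C lam K δ α'},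
        UD E C lam K δ α ≤ x := by
      rintro x ⟨α', hα', rfl⟩
      rw [key δ α hα.2, key δ α' hα'.2]
      have := hbest α' hα'
      have := mul_le_mul_of_nonneg_left this hlg
      linarith
    have hmem : UD E C lam K δ α ∈ {x | ∃ α' ∈ simplexA P K, x = UD E C lam K δ α'} :=
      ⟨α, hα, rfl⟩
    unfold worstUD
    exact le_antisymm (le_csInf ⟨_, hmem⟩ lb) (csInf_le ⟨_, lb⟩ hmem)
  refine ⟨part1, fun br hbr => ?_⟩
  have seteq : {x | ∃ δ ∈ simplexP P, x = UD E C lam K δ (br δ)}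
      = {x | ∃ δ ∈ simplexP P, x = worstUD E C lam K δ} := by
    ext x
    constructor
    · rintro ⟨δ, hδ, rfl⟩
      exact ⟨δ, hδ, part1 δ hδ (br δ) (hbr δ hδ).1 (hbr δ hδ).2⟩
    · rintro ⟨δ, hδ, rfl⟩
      exact ⟨δ, hδ, (part1 δ hδ (br δ) (hbr δ hδ).1 (hbr δ hδ).2).symm⟩
  rw [seteq]; rfl
end
end

section
/- Uniform randomization is the worst case for the guesser: let E be a nonempty subset of the finite secret set 𝒫. For every distribution δ∈Δ(𝒫) with support contained in E, the maximum over all duplicate-free lists A of elements of 𝒫 of u_A(δ,A) is at least the maximum over all such lists A of u_A(unif(E),A). -/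
open Finset

noncomputable section

variable {P : Type*} [DecidableEq P]

/-- Guesser's expected utility of the duplicate-free list strategy `A = ⟨a_1,…,a_T⟩` against
the mixed picker strategy `δ`:
`u_A(δ,A) = γ ∑_{i=1}^{T} δ(a_i) − σ ∑_{i=1}^{T} (1 − ∑_{j=1}^{i-1} δ(a_j))`. -/
def uAList (gam sig : ℝ) (δ : P → ℝ) (A : List P) : ℝ :=
  gam * (A.map δ).sum - sig * ∑ i ∈ Finset.range A.length, (1 - ((A.take i).map δ).sum)

/-- The uniform distribution on a finite set `E`. -/
def unif (E : Finset P) : P → ℝ :=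
  fun p => if p ∈ E then 1 / (E.card : ℝ) else 0

/-- Top-`i` partial sums of a descending-sorted list are at least `i/n` of the total. -/
private lemma topsum (M : List ℝ) (hsort : M.Pairwise (fun a b => b ≤ a))
    (i : ℕ) (hi : i ≤ M.length) :
    (i : ℝ) * M.sum ≤ (M.length : ℝ) * (M.take i).sum := by
  have hsplit := List.take_append_drop i M
  have hp : List.Pairwise (fun a b : ℝ => b ≤ a) (M.take i ++ M.drop i) := by
    rw [hsplit]; exact hsort
  obtain ⟨-, -, huv⟩ := List.pairwise_append.mp hp
  set u := M.take i with hu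
  set v := M.drop i with hv
  have h1 : ∀ x ∈ u, v.sum ≤ (v.length : ℝ) * x := by
    intro x hx
    have := List.sum_le_card_nsmul v x (fun y hy => huv x hx y hy)
    simpa [nsmul_eq_mul] using this
  have h2 : (u.map (fun _ => v.sum)).sum ≤ (u.map (fun x => (v.length : ℝ) * x)).sum :=
    List.sum_le_sum (fun x hx => h1 x hx)
  have h3 : (u.map (fun _ => v.sum)).sum = (u.length : ℝ) * v.sum := by
    simp [List.map_const', List.sum_replicate, nsmul_eq_mul]
  have h4 : (u.map (fun x => (v.length : ℝ) * x)).sum = (v.length : ℝ) * u.sum := by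
    simpa using List.sum_map_mul_left u id ((v.length : ℝ))
  have hul : u.length = i := by simp [hu, hi]
  have hvl : v.length = M.length - i := by simp [hv]
  have hsum : u.sum + v.sum = M.sum := by rw [← List.sum_append, hsplit]
  have hcast : ((M.length - i : ℕ) : ℝ) = (M.length : ℝ) - i := by
    have := Nat.cast_sub (R := ℝ) hi
    simpa using this
  rw [h3, h4, hul, hvl, hcast] at h2
  nlinarith [h2, hsum]

private lemma sum_map_unif (E : Finset P) (A : List P) :
    (A.map (unif E)).sum = ((A.filter (fun a => a ∈ E)).length : ℝ) / (E.card : ℝ) := by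
  induction A with
  | nil => simp
  | cons a A ih =>
    by_cases h : a ∈ E <;>
      simp [unif, h, ih, List.filter_cons] <;> ring

private lemma length_le_card {E : Finset P} {l : List P} (hn : l.Nodup)
    (hl : ∀ x ∈ l, x ∈ E) : l.length ≤ E.card := by
  have hsub : l.toFinset ⊆ E := fun x hx => hl x (List.mem_toFinset.mp hx)
  have := Finset.card_le_card hsub
  simpa [List.toFinset_card_of_nodup hn] using this

/-- uniform randomization is the worst case for the guesser: if
`supp(δ) ⊆ E` then the guesser's best achievable utility against `δ` is at least his best
achievable utility against `unif(E)`. -/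
theorem unif_worst_for_guesser [Fintype P] (gam sig : ℝ) (hgam : 0 < gam) (hsig : 0 < sig)
    (E : Finset P) (hE : E.Nonempty)
    (δ : P → ℝ) (hδ : δ ∈ simplexP P) (hsupp : ∀ p, 0 < δ p → p ∈ E) :
    sSup {x | ∃ A : List P, A.Nodup ∧ x = uAList gam sig (unif E) A} ≤
      sSup {x | ∃ A : List P, A.Nodup ∧ x = uAList gam sig δ A} := by
  classical
  obtain ⟨hδ0, hδ1⟩ := hδ
  set n := E.card with hn
  have hnpos : 0 < n := Finset.card_pos.mpr hE
  have hnR : (0:ℝ) < (n : ℝ) := by exact_mod_cast hnpos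
  have hzero : ∀ p ∉ E, δ p = 0 := by
    intro p hp
    by_contra h
    exact hp (hsupp p (lt_of_le_of_ne (hδ0 p) (Ne.symm h)))
  have hsumE : ∑ p ∈ E, δ p = 1 := by
    rw [← hδ1]
    exact Finset.sum_subset (Finset.subset_univ E) (fun p _ hp => hzero p hp)
  -- sorted list of E by δ descending
  let r : P → P → Prop := fun a b => δ b ≤ δ a
  haveI : DecidableRel r := fun a b => inferInstanceAs (Decidable (δ b ≤ δ a))
  haveI : IsTotal P r := ⟨fun a b => le_total (δ b) (δ a)⟩
  haveI : IsTrans P r := ⟨fun a b c h1 h2 => le_trans h2 h1⟩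
  set L := List.insertionSort r E.toList with hL
  have hperm : L.Perm E.toList := List.perm_insertionSort r _
  have hLnd : L.Nodup := hperm.nodup_iff.mpr E.nodup_toList
  have hLlen : L.length = n := by rw [hperm.length_eq, Finset.length_toList]
  have hLsum : (L.map δ).sum = 1 := by
    rw [(hperm.map δ).sum_eq, Finset.sum_map_toList]; exact hsumE
  have hsorted : (L.map δ).Pairwise (fun a b : ℝ => b ≤ a) := by
    have h := List.pairwise_insertionSort r E.toList
    exact List.pairwise_map.mpr h
  -- lower bound on partial sums
  have hps : ∀ i ≤ n, (i : ℝ) / (n : ℝ) ≤ ((L.take i).map δ).sum := by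
    intro i hi
    have hi' : i ≤ (L.map δ).length := by simpa [hLlen] using hi
    have := topsum (L.map δ) hsorted i hi'
    rw [hLsum, ← List.map_take] at this
    simp only [List.length_map, hLlen] at this
    rw [div_le_iff₀ hnR]
    linarith
  -- utilities of truncations of L against δ
  have hval : ∀ k ≤ n, uAList gam sig δ (L.take k) =
      gam * ((L.take k).map δ).sum -
        sig * ∑ i ∈ Finset.range k, (1 - ((L.take i).map δ).sum) := by
    intro k hk
    have hlen : (L.take k).length = k := by
      rw [List.length_take, hLlen]; exact min_eq_left hk
    unfold uAList
    rw [hlen]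
    have hterm : ∑ i ∈ Finset.range k, (1 - (((L.take k).take i).map δ).sum) =
        ∑ i ∈ Finset.range k, (1 - ((L.take i).map δ).sum) :=
      Finset.sum_congr rfl (fun i hi => by
        rw [List.take_take, min_eq_left (le_of_lt (Finset.mem_range.mp hi))])
    rw [hterm]
  -- the benchmark value
  set f : ℕ → ℝ := fun k =>
    gam * ((k : ℝ) / (n : ℝ)) - sig * ∑ i ∈ Finset.range k, (1 - (i : ℝ) / (n : ℝ)) with hf
  have hlow : ∀ k ≤ n, f k ≤ uAList gam sig δ (L.take k) := by
    intro k hk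
    rw [hval k hk, hf]
    have h1 : gam * ((k : ℝ) / (n : ℝ)) ≤ gam * ((L.take k).map δ).sum :=
      mul_le_mul_of_nonneg_left (hps k hk) hgam.le
    have h2 : ∑ i ∈ Finset.range k, (1 - ((L.take i).map δ).sum) ≤
        ∑ i ∈ Finset.range k, (1 - (i : ℝ) / (n : ℝ)) := by
      apply Finset.sum_le_sum
      intro i hi
      have : (i : ℝ) / (n : ℝ) ≤ ((L.take i).map δ).sum :=
        hps i (le_trans (le_of_lt (Finset.mem_range.mp hi)) hk)
      linarith
    nlinarith [mul_le_mul_of_nonneg_left h2 hsig.le]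
  -- upper bound: any nodup list against unif E is at most f k
  have hupp : ∀ A : List P, A.Nodup → uAList gam sig (unif E) A ≤
      f ((A.filter (fun a => a ∈ E)).length) := by
    intro A hA
    set k := (A.filter (fun a => a ∈ E)).length with hkdef
    have hkn : k ≤ n := by
      apply length_le_card (hA.filter _)
      intro x hx
      simpa using (List.mem_filter.mp hx).2
    have hkT : k ≤ A.length := List.length_filter_le _ _
    unfold uAList
    rw [sum_map_unif]
    have hcost : ∑ i ∈ Finset.range k, (1 - (i : ℝ) / (n : ℝ)) ≤
        ∑ i ∈ Finset.range A.length, (1 - ((A.take i).map (unif E)).sum) := by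
      have hstep : ∀ i ∈ Finset.range A.length,
          0 ≤ 1 - ((A.take i).map (unif E)).sum := by
        intro i _
        rw [sum_map_unif]
        have hnd : ((A.take i).filter (fun a => a ∈ E)).Nodup :=
          ((List.take_sublist i A).nodup hA).filter _
        have hmn : ((A.take i).filter (fun a => a ∈ E)).length ≤ n := by
          apply length_le_card hnd
          intro x hx
          simpa using (List.mem_filter.mp hx).2
        have : (((A.take i).filter (fun a => a ∈ E)).length : ℝ) ≤ (n : ℝ) := by
          exact_mod_cast hmn
        rw [sub_nonneg, div_le_one hnR]
        exact this
      calc ∑ i ∈ Finset.range k, (1 - (i : ℝ) / (n : ℝ))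
          ≤ ∑ i ∈ Finset.range k, (1 - ((A.take i).map (unif E)).sum) := by
            apply Finset.sum_le_sum
            intro i hi
            rw [sum_map_unif]
            have hmi : ((A.take i).filter (fun a => a ∈ E)).length ≤ i :=
              le_trans (List.length_filter_le _ _) (by simp [List.length_take])
            have : (((A.take i).filter (fun a => a ∈ E)).length : ℝ) ≤ (i : ℝ) := by
              exact_mod_cast hmi
            have h2 := (div_le_div_iff_of_pos_right hnR).mpr this
            linarith
        _ ≤ ∑ i ∈ Finset.range A.length, (1 - ((A.take i).map (unif E)).sum) := by
            apply Finset.sum_le_sum_of_subset_of_nonneg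
            · exact Finset.range_subset_range.mpr hkT
            · intro i hi _
              exact hstep i hi
    rw [hf]
    simp only
    have := mul_le_mul_of_nonneg_left hcost hsig.le
    rw [hn]
    linarith
  -- boundedness of the RHS set
  have hbdd : BddAbove {x | ∃ A : List P, A.Nodup ∧ x = uAList gam sig δ A} := by
    refine ⟨gam, ?_⟩
    rintro x ⟨A, hA, rfl⟩
    have hsum_le : ∀ (l : List P), l.Nodup → (l.map δ).sum ≤ 1 := by
      intro l hl
      rw [← List.sum_toFinset δ hl, ← hδ1]
      exact Finset.sum_le_sum_of_subset_of_nonneg (Finset.subset_univ _)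
        (fun p _ _ => hδ0 p)
    have hcost : 0 ≤ ∑ i ∈ Finset.range A.length, (1 - ((A.take i).map δ).sum) := by
      apply Finset.sum_nonneg
      intro i _
      have := hsum_le (A.take i) ((List.take_sublist i A).nodup hA)
      linarith
    have hgain := hsum_le A hA
    unfold uAList
    nlinarith
  -- conclude
  refine csSup_le ⟨0, [], List.nodup_nil, by simp [uAList]⟩ ?_
  rintro x ⟨A, hA, rfl⟩
  set k := (A.filter (fun a => a ∈ E)).length with hkdef
  have hkn : k ≤ n := by
    apply length_le_card (hA.filter _)
    intro x hx
    simpa using (List.mem_filter.mp hx).2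
  calc uAList gam sig (unif E) A ≤ f k := hupp A hA
    _ ≤ uAList gam sig δ (L.take k) := hlow k hkn
    _ ≤ sSup {x | ∃ A : List P, A.Nodup ∧ x = uAList gam sig δ A} :=
        le_csSup hbdd ⟨L.take k, (List.take_sublist k L).nodup hLnd, rfl⟩
end
end

section
/- Replacement improvement: let δ∈Δ(𝒫), let A=⟨a_1,…,a_T⟩ be a duplicate-free list of elements of 𝒫, let a_i be the entry in position i, let b∈𝒫 with b∉A, and let A' be obtained from A by replacing a_i with b. Then u_A(δ,A') − u_A(δ,A) = (δ(b)−δ(a_i))γ + (T−i)(δ(b)−δ(a_i))σ; in particular u_A(δ,A') ≥ u_A(δ,A) whenever δ(b) ≥ δ(a_i), strictly if δ(b) > δ(a_i). -/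
open Finset

noncomputable section

variable {P : Type*} [DecidableEq P]

lemma uAList_cons (gam sig : ℝ) (δ : P → ℝ) (x : P) (L : List P) :
    uAList gam sig δ (x :: L) = uAList gam sig δ L + δ x * (gam + sig * L.length) - sig := by
  simp only [uAList, List.map_cons, List.sum_cons, List.length_cons]
  rw [Finset.sum_range_succ']
  have h : ∀ i : ℕ, (1 - ((List.take (i + 1) (x :: L)).map δ).sum)
      = (1 - ((List.take i L).map δ).sum) - δ x := by
    intro i; simp [List.take_succ_cons]; ring
  simp only [h, Finset.sum_sub_distrib, Finset.sum_const, Finset.card_range, nsmul_eq_mul]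
  simp; ring

lemma uAList_diff (gam sig : ℝ) (δ : P → ℝ) (L₁ L₂ : List P) (x y : P) :
    uAList gam sig δ (L₁ ++ x :: L₂) - uAList gam sig δ (L₁ ++ y :: L₂) =
      (δ x - δ y) * (gam + sig * L₂.length) := by
  induction L₁ with
  | nil => simp [uAList_cons]; ring
  | cons a L ih =>
    simp only [List.cons_append, uAList_cons, List.length_append, List.length_cons]
    linarith [ih]

/-- replacing the entry `a_i` in position `i` (0-indexed here, so position
`i+1` of `T` in 1-indexed terms) of a duplicate-free list by a fresh `b ∉ A` changes the
guesser's utility by exactly `(δ(b)−δ(a_i))γ + (T−(i+1))(δ(b)−δ(a_i))σ`; in particular the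
replacement improves the utility whenever `δ(b) ≥ δ(a_i)`, strictly if `δ(b) > δ(a_i)`. -/
theorem uAList_replace [Fintype P] (gam sig : ℝ) (hgam : 0 < gam) (hsig : 0 < sig)
    (δ : P → ℝ) (hδ : δ ∈ simplexP P)
    (A : List P) (hnd : A.Nodup) (i : ℕ) (hi : i < A.length)
    (b : P) (hb : b ∉ A) :
    uAList gam sig δ (A.set i b) - uAList gam sig δ A =
      (δ b - δ (A.get ⟨i, hi⟩)) * gam +
        ((A.length : ℝ) - ((i : ℝ) + 1)) * (δ b - δ (A.get ⟨i, hi⟩)) * sig ∧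
    (δ (A.get ⟨i, hi⟩) ≤ δ b → uAList gam sig δ A ≤ uAList gam sig δ (A.set i b)) ∧
    (δ (A.get ⟨i, hi⟩) < δ b → uAList gam sig δ A < uAList gam sig δ (A.set i b)) := by
  have hset : A.set i b = A.take i ++ b :: A.drop (i + 1) :=
    List.set_eq_take_cons_drop b hi
  have hA : A = A.take i ++ A.get ⟨i, hi⟩ :: A.drop (i + 1) := by
    conv_lhs => rw [← List.take_append_drop i A, List.drop_eq_getElem_cons hi]
    simp [List.get_eq_getElem]
  have hlen : ((A.drop (i + 1)).length : ℝ) = (A.length : ℝ) - ((i : ℝ) + 1) := by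
    rw [List.length_drop]
    have : i + 1 ≤ A.length := hi
    push_cast [Nat.cast_sub this]
    ring
  have key : uAList gam sig δ (A.set i b) - uAList gam sig δ A =
      (δ b - δ (A.get ⟨i, hi⟩)) * gam +
        ((A.length : ℝ) - ((i : ℝ) + 1)) * (δ b - δ (A.get ⟨i, hi⟩)) * sig := by
    have h2 := uAList_diff gam sig δ (A.take i) (A.drop (i + 1)) b (A.get ⟨i, hi⟩)
    rw [← hset, ← hA] at h2
    rw [h2, hlen]; ring
  have hc : (0 : ℝ) ≤ (A.length : ℝ) - ((i : ℝ) + 1) := by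
    have : i + 1 ≤ A.length := hi
    have := Nat.cast_le (α := ℝ).mpr this
    push_cast at this ⊢; linarith
  refine ⟨key, ?_, ?_⟩
  · intro h
    have h1 := mul_nonneg (sub_nonneg.mpr h) hgam.le
    have h2 := mul_nonneg (mul_nonneg hc (sub_nonneg.mpr h)) hsig.le
    linarith [key]
  · intro h
    have h1 := mul_pos (sub_pos.mpr h) hgam
    have h2 := mul_nonneg (mul_nonneg hc (sub_pos.mpr h).le) hsig.le
    linarith [key]
end
end

section
/- Conditional decomposition of guesser utility: let δ∈Δ(𝒫) and let A', A'' be duplicate-free lists of elements of 𝒫 with disjoint sets of entries, such that ∑_{p∈A'}δ(p) < 1. Define the conditional distribution δ̂ by δ̂(p)=δ(p)/(1−∑_{p'∈A'}δ(p')) for p∉A' and δ̂(p)=0 for p∈A'. Then u_A(δ, A'⧺A'') = u_A(δ,A') + (1−∑_{p∈A'}δ(p))·u_A(δ̂, A''), where A'⧺A'' is the concatenation of A' followed by A''. -/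
open Finset

noncomputable section

variable {P : Type*} [DecidableEq P]

/-- conditional decomposition of the guesser's utility over a concatenation
`A' ⧺ A''` of duplicate-free lists with disjoint entries, where `δ̂` is the conditional
distribution of `δ` given that the secret is not in `A'`. -/
theorem uAList_concat [Fintype P] (gam sig : ℝ) (hgam : 0 < gam) (hsig : 0 < sig)
    (δ : P → ℝ) (hδ : δ ∈ simplexP P)
    (A' A'' : List P) (hnd' : A'.Nodup) (hnd'' : A''.Nodup)
    (hdisj : ∀ p, p ∈ A' → p ∉ A'')
    (hlt : (A'.map δ).sum < 1) :
    uAList gam sig δ (A' ++ A'') =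
      uAList gam sig δ A' + (1 - (A'.map δ).sum) *
        uAList gam sig
          (fun p => if p ∈ A' then 0 else δ p / (1 - (A'.map δ).sum)) A'' := by
  classical
  set S := (A'.map δ).sum with hS
  have hc : 1 - S ≠ 0 := by linarith
  have key : ∀ l : List P, (∀ p ∈ l, p ∉ A') →
      (l.map fun p => if p ∈ A' then 0 else δ p / (1 - S)).sum = (l.map δ).sum / (1 - S) := by
    intro l hl
    induction l with
    | nil => simp
    | cons a t ih =>
      simp only [List.map_cons, List.sum_cons]
      rw [if_neg (hl a (List.mem_cons_self)),
        ih (fun p hp => hl p (List.mem_cons_of_mem a hp))]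
      ring
  have hkey'' : ∀ k : ℕ,
      ((A''.take k).map fun p => if p ∈ A' then 0 else δ p / (1 - S)).sum
        = ((A''.take k).map δ).sum / (1 - S) := by
    intro k
    exact key _ (fun p hp hp' => hdisj p hp' (List.mem_of_mem_take hp))
  have hkeyall : (A''.map fun p => if p ∈ A' then 0 else δ p / (1 - S)).sum
      = (A''.map δ).sum / (1 - S) := key _ (fun p hp hp' => hdisj p hp' hp)
  simp only [uAList, List.map_append, List.sum_append, List.length_append,
    Finset.sum_range_add, hkeyall]
  have h1 : ∀ i ∈ Finset.range A'.length,
      (1 - (((A' ++ A'').take i).map δ).sum) = (1 - ((A'.take i).map δ).sum) := by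
    intro i hi
    rw [List.take_append_of_le_length (le_of_lt (Finset.mem_range.mp hi))]
  have h2 : ∀ i ∈ Finset.range A''.length,
      (1 - (((A' ++ A'').take (A'.length + i)).map δ).sum)
        = (1 - S) * (1 - (((A''.take i).map fun p =>
            if p ∈ A' then 0 else δ p / (1 - S)).sum)) := by
    intro i _
    rw [List.take_length_add_append i, List.map_append, List.sum_append, hkey'' i]
    field_simp
    ring
  rw [Finset.sum_congr rfl h1, Finset.sum_congr rfl h2, ← Finset.mul_sum]
  field_simp
  ring
end
end

section
/- The guesser goes all the way: let δ∈Δ(𝒫) and let E = supp(δ) be its support. If γ > (|E|+1)σ/2, then every duplicate-free list A of elements of E that maximizes u_A(δ,·) over all duplicate-free lists of elements of E must contain every element of E (i.e., it is a permutation of E); in particular the empty list (quitting) and any list exploring only a proper subset of E are not best responses. -/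
open Finset

noncomputable section

variable {P : Type*} [DecidableEq P]

lemma uAList_append_single (gam sig : ℝ) (δ : P → ℝ) (A : List P) (c : P) :
    uAList gam sig δ (A ++ [c]) =
      uAList gam sig δ A + gam * δ c - sig * (1 - (A.map δ).sum) := by
  unfold uAList
  have hlen : (A ++ [c]).length = A.length + 1 := by simp
  rw [hlen, Finset.sum_range_succ]
  have h1 : ∀ i ∈ Finset.range A.length,
      (1 - (((A ++ [c]).take i).map δ).sum) = (1 - ((A.take i).map δ).sum) := by
    intro i hi
    rw [Finset.mem_range] at hi
    rw [List.take_append_of_le_length (le_of_lt hi)]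
  rw [Finset.sum_congr rfl h1]
  have h2 : (A ++ [c]).take A.length = A := List.take_left
  rw [h2]
  simp
  ring

lemma extend_lemma (gam sig : ℝ) (hsig : 0 < sig) (δ : P → ℝ) :
    ∀ n (M : Finset P), M.card = n → (∀ c ∈ M, 0 < δ c) →
    ∀ A : List P, A.Nodup → (∀ a ∈ A, 0 < δ a) → (∀ c ∈ M, c ∉ A) →
    (A.map δ).sum + ∑ c ∈ M, δ c = 1 →
    ∃ B : List P, B.Nodup ∧ (∀ b ∈ B, 0 < δ b) ∧
      uAList gam sig δ A + (gam - sig * ((n : ℝ) + 1) / 2) * (∑ c ∈ M, δ c)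
        ≤ uAList gam sig δ B := by
  intro n
  induction n with
  | zero =>
    intro M hcard _ A hnd hpos _ _
    rw [Finset.card_eq_zero] at hcard
    subst hcard
    exact ⟨A, hnd, hpos, by simp⟩
  | succ n ih =>
    intro M hcard hMpos A hnd hpos hdisj hsum
    have hne : M.Nonempty := Finset.card_pos.mp (by omega)
    obtain ⟨c, hcM, hcmax⟩ := Finset.exists_max_image M δ hne
    set R := ∑ x ∈ M, δ x with hR
    have hRle : R ≤ ((n : ℝ) + 1) * δ c := by
      have := Finset.sum_le_card_nsmul M δ (δ c) (fun b hb => hcmax b hb)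
      rw [hcard] at this
      push_cast at this
      simpa [nsmul_eq_mul] using this
    have hcA : c ∉ A := hdisj c hcM
    have hnd' : (A ++ [c]).Nodup := by
      simp [List.nodup_append, hnd, hcA]
      intro a ha hac
      exact hcA (hac ▸ ha)
    have hpos' : ∀ a ∈ A ++ [c], 0 < δ a := by
      intro a ha
      rcases List.mem_append.mp ha with h | h
      · exact hpos a h
      · simp only [List.mem_singleton] at h; rw [h]; exact hMpos c hcM
    have herase : ∑ x ∈ M.erase c, δ x = R - δ c := by
      have := Finset.sum_erase_add M δ hcM
      linarith
    have hsum' : ((A ++ [c]).map δ).sum + ∑ x ∈ M.erase c, δ x = 1 := by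
      simp only [List.map_append, List.sum_append, List.map_singleton,
        List.sum_singleton]
      rw [herase]; linarith
    have hdisj' : ∀ x ∈ M.erase c, x ∉ A ++ [c] := by
      intro x hx
      have hxc := Finset.ne_of_mem_erase hx
      have hxM := Finset.mem_of_mem_erase hx
      simp [List.mem_append, hdisj x hxM, hxc]
    obtain ⟨B, hBnd, hBpos, hBle⟩ :=
      ih (M.erase c) (by rw [Finset.card_erase_of_mem hcM, hcard]; omega) 
        (fun x hx => hMpos x (Finset.mem_of_mem_erase hx))
        (A ++ [c]) hnd' hpos' hdisj' hsum'
    refine ⟨B, hBnd, hBpos, ?_⟩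
    rw [uAList_append_single] at hBle
    rw [herase] at hBle
    have h1S : 1 - (A.map δ).sum = R := by linarith
    rw [h1S] at hBle
    push_cast
    nlinarith [hBle]

/-- the guesser goes all the way: if `γ > (|supp(δ)|+1)σ/2`, then any
duplicate-free list of elements of `supp(δ)` that maximizes the guesser's utility among all
such lists must contain every element of `supp(δ)`. -/
theorem guesser_goes_all_the_way [Fintype P] (gam sig : ℝ) (hgam : 0 < gam) (hsig : 0 < sig)
    (δ : P → ℝ) (hδ : δ ∈ simplexP P)
    (hbig : (((Finset.univ.filter (fun p => 0 < δ p)).card : ℝ) + 1) * sig / 2 < gam)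
    (A : List P) (hnd : A.Nodup) (hmem : ∀ a ∈ A, 0 < δ a)
    (hmax : ∀ B : List P, B.Nodup → (∀ b ∈ B, 0 < δ b) →
      uAList gam sig δ B ≤ uAList gam sig δ A) :
    ∀ p, 0 < δ p → p ∈ A := by
  obtain ⟨hnn, hone⟩ := hδ
  intro p hp
  by_contra hpA
  set E : Finset P := Finset.univ.filter (fun p => 0 < δ p) with hE
  set M : Finset P := E \ A.toFinset with hM
  have hAE : A.toFinset ⊆ E := by
    intro a ha
    rw [List.mem_toFinset] at ha
    simp [hE, hmem a ha]
  have hpM : p ∈ M := by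
    simp [hM, hE, hp, List.mem_toFinset, hpA]
  have hMpos : ∀ c ∈ M, 0 < δ c := by
    intro c hc
    have : c ∈ E := Finset.mem_sdiff.mp hc |>.1
    simpa [hE] using this
  have hsumE : ∑ x ∈ E, δ x = 1 := by
    rw [← hone]
    apply Finset.sum_subset (Finset.subset_univ E)
    intro x _ hx
    have := hnn x
    simp only [hE, Finset.mem_filter, Finset.mem_univ, true_and] at hx
    linarith [lt_or_eq_of_le this, hx]
  have hsumA : (A.map δ).sum = ∑ a ∈ A.toFinset, δ a := by
    rw [List.sum_toFinset δ hnd]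
  have hsum : (A.map δ).sum + ∑ c ∈ M, δ c = 1 := by
    rw [hsumA, hM, add_comm]
    rw [Finset.sum_sdiff hAE, hsumE]
  have hdisj : ∀ c ∈ M, c ∉ A := by
    intro c hc
    have := (Finset.mem_sdiff.mp hc).2
    simpa [List.mem_toFinset] using this
  obtain ⟨B, hBnd, hBpos, hBle⟩ :=
    extend_lemma gam sig hsig δ M.card M rfl hMpos A hnd hmem hdisj hsum
  have hmaxB := hmax B hBnd hBpos
  have hRpos : 0 < ∑ c ∈ M, δ c := Finset.sum_pos hMpos ⟨p, hpM⟩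
  have hcard : (M.card : ℝ) ≤ (E.card : ℝ) := by
    exact_mod_cast Finset.card_le_card (Finset.sdiff_subset)
  have hcoef : 0 < gam - sig * ((M.card : ℝ) + 1) / 2 := by
    have : sig * ((M.card : ℝ) + 1) / 2 ≤ ((E.card : ℝ) + 1) * sig / 2 := by nlinarith
    rw [hE] at *
    linarith
  nlinarith [hBle, hmaxB, mul_pos hcoef hRpos]
end
end
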